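/- If G is a connected bipartite graph of order at least two, then the intersection of all stability systems of G does not have cardinality exactly one. -/

import Mathlib

open Finset

variable {V : Type*}

/-- A stable (independent) set of vertices of `G`. -/
def IsStableSet (G : SimpleGraph V) (S : Finset V) : Prop :=
  ∀ u ∈ S, ∀ v ∈ S, ¬ G.Adj u v

/-- The stability number `α(G)`: the maximum cardinality of a stable set. -/
noncomputable def stabNum (G : SimpleGraph V) [Fintype V] : ℕ :=
  sSup {n : ℕ | ∃ S : Finset V, IsStableSet G S ∧ S.card = n}

/-- A stability system of `G`: a stable set of maximum cardinality. -/
def IsStabSystem (G : SimpleGraph V) [Fintype V] (S : Finset V) : Prop :=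
  IsStableSet G S ∧ S.card = stabNum G

/-- `G` is α⁻-stable: deleting any edge leaves the stability number unchanged. -/
def AlphaMinusStable (G : SimpleGraph V) [Fintype V] : Prop :=
  ∀ u v : V, G.Adj u v → stabNum (G.deleteEdges {s(u, v)}) = stabNum G

/-- `G` is α⁺-stable: adding any edge of the complement leaves the stability
number unchanged. -/
def AlphaPlusStable (G : SimpleGraph V) [Fintype V] : Prop :=
  ∀ u v : V, u ≠ v → ¬ G.Adj u v →
    stabNum (G ⊔ SimpleGraph.fromEdgeSet {s(u, v)}) = stabNum G

/-- A matching of `G`, viewed as a set of pairwise non-incident edges. -/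
def IsMatchingSet (G : SimpleGraph V) (M : Finset (Sym2 V)) : Prop :=
  (↑M : Set (Sym2 V)) ⊆ G.edgeSet ∧
    ∀ e ∈ M, ∀ f ∈ M, e ≠ f → ∀ v : V, ¬ (v ∈ e ∧ v ∈ f)

/-- The matching number `μ(G)`. -/
noncomputable def matchNum (G : SimpleGraph V) [Fintype V] : ℕ :=
  sSup {n : ℕ | ∃ M : Finset (Sym2 V), IsMatchingSet G M ∧ M.card = n}

/-- A maximum matching of `G`. -/
def IsMaximumMatching (G : SimpleGraph V) [Fintype V] (M : Finset (Sym2 V)) : Prop :=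
  IsMatchingSet G M ∧ M.card = matchNum G

/-- A perfect matching of `G`: a matching covering every vertex. -/
def IsPerfectMatchingSet (G : SimpleGraph V) (M : Finset (Sym2 V)) : Prop :=
  IsMatchingSet G M ∧ ∀ v : V, ∃ e ∈ M, v ∈ e

/-- A pendant vertex: a vertex of degree one. -/
def IsPendant (G : SimpleGraph V) (v : V) : Prop :=
  (G.neighborSet v).ncard = 1

/-- A set `D` is 2-dominating: every vertex outside `D` has at least two
neighbors in `D`. -/
def Is2Dominating (G : SimpleGraph V) (D : Finset V) : Prop :=
  ∀ v : V, v ∉ D → 2 ≤ ({u : V | u ∈ D ∧ G.Adj v u}).ncard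

/-- A chordal graph: no induced cycle on four or more vertices. -/
def IsChordal (G : SimpleGraph V) : Prop :=
  ∀ n : ℕ, 4 ≤ n → IsEmpty (SimpleGraph.cycleGraph n ↪g G)

/-- A bipartite graph: the vertex set is partitioned into two stable sets. -/
def IsBipartiteGr (G : SimpleGraph V) [Fintype V] [DecidableEq V] : Prop :=
  ∃ C : Finset V, IsStableSet G C ∧ IsStableSet G Cᶜ

/-- A strong unique independence graph: a graph with a unique stability system
whose complement is also stable. -/
def IsStrongUniqueIndep (G : SimpleGraph V) [Fintype V] [DecidableEq V] : Prop :=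
  ∃ S : Finset V, IsStabSystem G S ∧ (∀ S' : Finset V, IsStabSystem G S' → S' = S) ∧
    IsStableSet G Sᶜ

/-- A bistable bipartite graph: its two color classes are its only two
stability systems. -/
def IsBistable (G : SimpleGraph V) [Fintype V] [DecidableEq V] : Prop :=
  ∃ A : Finset V, IsStableSet G A ∧ IsStableSet G Aᶜ ∧
    IsStabSystem G A ∧ IsStabSystem G Aᶜ ∧ A ≠ Aᶜ ∧
    ∀ S : Finset V, IsStabSystem G S → S = A ∨ S = Aᶜ

/-- A vertex cover of `G`. -/
def IsVertexCover (G : SimpleGraph V) (C : Finset V) : Prop :=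
  ∀ u v : V, G.Adj u v → u ∈ C ∨ v ∈ C

/-- A minimum vertex cover of `G`. -/
def IsMinVertexCover (G : SimpleGraph V) [Fintype V] (C : Finset V) : Prop :=
  IsVertexCover G C ∧ ∀ C' : Finset V, IsVertexCover G C' → C.card ≤ C'.card

/-! If `A, Aᶜ` is a bipartition of `G`, then for two maximum stable sets `S₁, S₂` the sets
`(S₁ ∩ S₂ ∩ A) ∪ ((S₁ ∪ S₂) \ A)` and `((S₁ ∪ S₂) ∩ A) ∪ ((S₁ ∩ S₂) \ A)` are stable and their
sizes add up to `|S₁| + |S₂|`, so both are maximum. Hence a maximum stable set `S` with `S ∩ A`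
as small as possible has `S ∩ A` inside the core. If the core were `{v}` with `v ∈ A`, then
`S ⊆ {v} ∪ (Aᶜ \ {u})` for a neighbour `u` of `v`, so `Aᶜ` would be a maximum stable set
avoiding `v`. -/

section StabilitySystems

variable [Fintype V] {G : SimpleGraph V}

theorem bddAbove_stableSet_cards :
    BddAbove {n : ℕ | ∃ S : Finset V, IsStableSet G S ∧ S.card = n} :=
  ⟨Fintype.card V, by rintro _ ⟨S, -, rfl⟩; exact S.card_le_univ⟩

theorem IsStableSet.card_le_stabNum {S : Finset V} (hS : IsStableSet G S) :
    S.card ≤ stabNum G :=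
  le_csSup bddAbove_stableSet_cards ⟨S, hS, rfl⟩

theorem exists_isStabSystem (G : SimpleGraph V) : ∃ S : Finset V, IsStabSystem G S := by
  have hne : {n : ℕ | ∃ S : Finset V, IsStableSet G S ∧ S.card = n}.Nonempty :=
    ⟨0, ∅, by simp [IsStableSet], rfl⟩
  obtain ⟨S, hS, hcard⟩ := Nat.sSup_mem hne bddAbove_stableSet_cards
  exact ⟨S, hS, hcard⟩

theorem IsStableSet.isStabSystem_of_stabNum_le_card {S : Finset V} (hS : IsStableSet G S)
    (h : stabNum G ≤ S.card) : IsStabSystem G S :=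
  ⟨hS, le_antisymm hS.card_le_stabNum h⟩

variable [DecidableEq V] {A : Finset V}

theorem isStableSet_inter_union_sdiff (hA : IsStableSet G A) (hB : IsStableSet G Aᶜ)
    {P Q : Finset V} (hPQ : ∀ p ∈ P ∩ A, ∀ q ∈ Q \ A, ¬ G.Adj p q) :
    IsStableSet G (P ∩ A ∪ Q \ A) := by
  have hsdiff : ∀ {x}, x ∈ Q \ A → x ∈ Aᶜ := fun hx => mem_compl.2 (mem_sdiff.1 hx).2
  intro x hx y hy hxy
  rw [mem_union] at hx hy
  rcases hx with hx | hx <;> rcases hy with hy | hy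
  · exact hA x (mem_inter.1 hx).2 y (mem_inter.1 hy).2 hxy
  · exact hPQ x hx y hy hxy
  · exact hPQ y hy x hx hxy.symm
  · exact hB x (hsdiff hx) y (hsdiff hy) hxy

theorem IsStabSystem.meet (hA : IsStableSet G A) (hB : IsStableSet G Aᶜ) {S₁ S₂ : Finset V}
    (h₁ : IsStabSystem G S₁) (h₂ : IsStabSystem G S₂) :
    IsStabSystem G (S₁ ∩ S₂ ∩ A ∪ (S₁ ∪ S₂) \ A) := by
  have hedge : ∀ {S p q}, IsStabSystem G S → p ∈ S → q ∈ S → ¬ G.Adj p q :=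
    fun hS hp hq => hS.1 _ hp _ hq
  have hmeet : IsStableSet G (S₁ ∩ S₂ ∩ A ∪ (S₁ ∪ S₂) \ A) := by
    refine isStableSet_inter_union_sdiff hA hB fun p hp q hq => ?_
    simp only [mem_inter, mem_sdiff, mem_union] at hp hq
    rcases hq.1 with hq₁ | hq₂
    exacts [hedge h₁ hp.1.1 hq₁, hedge h₂ hp.1.2 hq₂]
  have hjoin : IsStableSet G ((S₁ ∪ S₂) ∩ A ∪ (S₁ ∩ S₂) \ A) := by
    refine isStableSet_inter_union_sdiff hA hB fun p hp q hq => ?_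
    simp only [mem_inter, mem_sdiff, mem_union] at hp hq
    rcases hp.1 with hp₁ | hp₂
    exacts [hedge h₁ hp₁ hq.1.1, hedge h₂ hp₂ hq.1.2]
  have hdisj : ∀ X Y : Finset V, Disjoint (X ∩ A) (Y \ A) := fun X Y =>
    disjoint_left.2 fun x hx hx' => (mem_sdiff.1 hx').2 (mem_inter.1 hx).2
  have hsum : (S₁ ∩ S₂ ∩ A ∪ (S₁ ∪ S₂) \ A).card + ((S₁ ∪ S₂) ∩ A ∪ (S₁ ∩ S₂) \ A).card
      = S₁.card + S₂.card := by
    rw [card_union_of_disjoint (hdisj _ _), card_union_of_disjoint (hdisj _ _),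
      ← card_union_add_card_inter S₁ S₂, ← card_sdiff_add_card_inter (S₁ ∪ S₂) A,
      ← card_sdiff_add_card_inter (S₁ ∩ S₂) A]
    ring
  have hjoin_le := hjoin.card_le_stabNum
  rw [h₁.2, h₂.2] at hsum
  exact hmeet.isStabSystem_of_stabNum_le_card (by omega)

theorem exists_isStabSystem_inter_subset_forall (hA : IsStableSet G A)
    (hB : IsStableSet G Aᶜ) :
    ∃ S, IsStabSystem G S ∧ ∀ S', IsStabSystem G S' → S ∩ A ⊆ S' := by
  classical
  obtain ⟨S₀, hS₀⟩ := exists_isStabSystem G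
  obtain ⟨S, hS, hmin⟩ := exists_min_image ({S | IsStabSystem G S} : Finset (Finset V))
    (fun S => (S ∩ A).card) ⟨S₀, by simpa using hS₀⟩
  simp only [mem_filter_univ] at hS hmin
  refine ⟨S, hS, fun S' hS' => ?_⟩
  have hmeet := hS.meet hA hB hS'
  have hsub : S ∩ S' ∩ A ⊆ S ∩ A := inter_subset_inter_right inter_subset_left
  have hmeetA : (S ∩ S' ∩ A ∪ (S ∪ S') \ A) ∩ A = S ∩ S' ∩ A := by
    ext x; simp only [mem_inter, mem_union, mem_sdiff]; tauto
  have hle := hmin _ hmeet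
  rw [hmeetA] at hle
  rw [← eq_of_subset_of_card_le hsub hle]
  exact fun x hx => (mem_inter.1 (mem_inter.1 hx).1).2

theorem card_le_card_compl_of_inter_subset_singleton {S : Finset V} (hS : IsStableSet G S)
    {u v : V} (hSA : S ∩ A ⊆ {v}) (huv : G.Adj v u) (hu : u ∉ A) :
    S.card ≤ Aᶜ.card := by
  have hout : ∀ x ∈ S, x ≠ v → x ∈ Aᶜ := fun x hx hxv =>
    mem_compl.2 fun hxA => hxv (mem_singleton.1 (hSA (mem_inter.2 ⟨hx, hxA⟩)))
  by_cases hvS : v ∈ S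
  · have hsub : S ⊆ insert v (Aᶜ.erase u) := by
      intro x hx
      by_cases hxv : x = v
      · exact hxv ▸ mem_insert_self _ _
      · refine mem_insert_of_mem (mem_erase.2 ⟨?_, hout x hx hxv⟩)
        rintro rfl
        exact hS v hvS x hx huv
    calc S.card ≤ (insert v (Aᶜ.erase u)).card := card_le_card hsub
      _ ≤ (Aᶜ.erase u).card + 1 := card_insert_le _ _
      _ = Aᶜ.card := card_erase_add_one (mem_compl.2 hu)
  · exact card_le_card fun x hx => hout x hx (ne_of_mem_of_not_mem hx hvS)

theorem IsBipartiteGr.exists_mem (h : IsBipartiteGr G) (v : V) :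
    ∃ A : Finset V, v ∈ A ∧ IsStableSet G A ∧ IsStableSet G Aᶜ := by
  obtain ⟨C, hC, hCc⟩ := h
  by_cases hv : v ∈ C
  · exact ⟨C, hv, hC, hCc⟩
  · exact ⟨Cᶜ, mem_compl.2 hv, hCc, by rwa [compl_compl]⟩

end StabilitySystems

/-- If `G` is a connected bipartite graph of order at least two,
then the intersection of all stability systems of `G` does not have
cardinality exactly one. -/
theorem stmt13 {V : Type*} [Fintype V] [DecidableEq V] (G : SimpleGraph V)
    (hc : G.Connected) (hbip : IsBipartiteGr G) (h2 : 2 ≤ Fintype.card V) :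
    (⋂ S ∈ {S : Finset V | IsStabSystem G S}, (↑S : Set V)).ncard ≠ 1 := by
  intro hcard
  obtain ⟨v, hv⟩ := Set.ncard_eq_one.1 hcard
  have hcore : ∀ x, (∀ S, IsStabSystem G S → x ∈ S) ↔ x = v := fun x => by
    simpa using Set.ext_iff.1 hv x
  obtain ⟨A, hvA, hA, hB⟩ := hbip.exists_mem v
  have : Nontrivial V := Fintype.one_lt_card_iff_nontrivial.1 h2
  obtain ⟨u, huv⟩ := hc.preconnected.exists_adj_of_nontrivial v
  obtain ⟨S, hS, hSA⟩ := exists_isStabSystem_inter_subset_forall hA hB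
  have hSv : S ∩ A ⊆ {v} := fun x hx => mem_singleton.2 ((hcore x).1 (hSA · · hx))
  have huA : u ∉ A := fun huA => hA v hvA u huA huv
  have hcompl : IsStabSystem G Aᶜ := hB.isStabSystem_of_stabNum_le_card <|
    hS.2 ▸ card_le_card_compl_of_inter_subset_singleton hS.1 hSv huv huA
  exact mem_compl.1 ((hcore v).2 rfl Aᶜ hcompl) hvA
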